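/- Suppose premiums are adjusted according to aggregate reported claims. Then for every i ∈ {1,…,l}, every integer z with 0 < z ≤ c_i and every n ≥ 1: ψ'_i(0;z,n+1) = Σ_{j=1}^l Σ_{x=0}^{c_i−z} Σ_{y=0}^{c_i−z−x} t_{ij}(x+y)·ψ_j(c_i−z−x−y, n)·f_{XY}(x,y) + q·Σ_{j=1}^l Σ_{y=1}^{c_j} t_{ij}(c_i−z+y)·ψ'_j(0;y,n)·ξ_y(c_i−z) + q·Σ_{j=1}^l Σ_{y=c_j+1}^∞ t_{ij}(c_i−z+y)·ξ_y(c_i−z) + (1−q)·Σ_{y=1}^∞ ξ_y(c_i−z) + Σ_{x=c_i−z+1}^∞ f_X(x), and moreover ψ'_i(0;z,1) = (1−q)·Σ_{y=1}^∞ ξ_y(c_i−z) + Σ_{x=c_i−z+1}^∞ f_X(x). -/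

import Mathlib

open scoped BigOperators

noncomputable section

namespace DelayedClaims

/-- Marginal pmf of the main claim: `f_X(x) = Σ_y f_{XY}(x,y)`. -/
def fX (f : ℕ → ℕ → ℝ) (x : ℕ) : ℝ := ∑' y : ℕ, f x y

/-- `ξ_y(m) = Σ_{x=1}^m f_{XY}(x, y + m - x)`. -/
def xi (f : ℕ → ℕ → ℝ) (y m : ℕ) : ℝ := ∑ x ∈ Finset.Icc 1 m, f x (y + m - x)

/-- Probability weight of a single period outcome `(x, y, d)`:
`d = true` means the settlement of the by-claim `y` is delayed (probability `q`). -/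
def w (f : ℕ → ℕ → ℝ) (q : ℝ) (p : ℕ × ℕ × Bool) : ℝ :=
  f p.1 p.2.1 * (if p.2.2 then q else 1 - q)

/-- Probability weight of an `n`-period path of i.i.d. period outcomes. -/
def pathWeight (f : ℕ → ℕ → ℝ) (q : ℝ) (n : ℕ) (ω : Fin n → ℕ × ℕ × Bool) : ℝ :=
  ∏ s : Fin n, w f q (ω s)

/-- Ruin indicator along a path.  Here `c` lists the premium levels,
`T i s` is the premium level following level `i` when the period adjustment
statistic equals `s`, `stat x y d carry` is the period adjustment statistic,
`i` is the current premium level, `u` the current surplus, and `carry` the amount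
of the by-claim whose settlement was delayed from the previous period (`0` if none).
In each period the premium `c i` is received up front and the settled amount
`x + (1-d)·y + carry` is paid at the end of the period; ruin occurs as soon as
the surplus becomes negative at the end of some period. -/
def ruined (l : ℕ) (c : Fin l → ℕ) (T : Fin l → ℕ → Fin l)
    (stat : ℕ → ℕ → Bool → ℕ → ℕ) :
    (n : ℕ) → (Fin n → ℕ × ℕ × Bool) → Fin l → ℤ → ℕ → Bool
  | 0, _, _, _, _ => false
  | n + 1, ω, i, u, carry =>
    let x : ℕ := (ω 0).1
    let y : ℕ := (ω 0).2.1
    let d : Bool := (ω 0).2.2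
    let u' : ℤ := u + (c i : ℤ) - ((x : ℤ) + (if d then 0 else (y : ℤ)) + (carry : ℤ))
    if u' < 0 then true
    else ruined l c T stat n (fun s => ω s.succ) (T i (stat x y d carry)) u'
      (if d then y else 0)

/-- `ψ'_i(u; z, n)`: the finite-time ruin probability over horizon `n` of the model with
an up-front delayed by-claim `z` settled at the end of period 1 (taking `z = 0` gives the
model without an up-front delayed by-claim), with initial premium level `i` and
initial surplus `u`.  By convention it equals `1` for `u < 0` and `0` for `n = 0`. -/
def psiAux (l : ℕ) (c : Fin l → ℕ) (T : Fin l → ℕ → Fin l)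
    (stat : ℕ → ℕ → Bool → ℕ → ℕ) (f : ℕ → ℕ → ℝ) (q : ℝ)
    (i : Fin l) (u : ℤ) (z : ℕ) (n : ℕ) : ℝ :=
  if u < 0 then 1
  else ∑' ω : Fin n → ℕ × ℕ × Bool,
    pathWeight f q n ω * (if ruined l c T stat n ω i u z then 1 else 0)

/-- `ψ_i(u, n)`: finite-time ruin probability without an up-front delayed by-claim. -/
def psi (l : ℕ) (c : Fin l → ℕ) (T : Fin l → ℕ → Fin l)
    (stat : ℕ → ℕ → Bool → ℕ → ℕ) (f : ℕ → ℕ → ℝ) (q : ℝ)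
    (i : Fin l) (u : ℤ) (n : ℕ) : ℝ :=
  psiAux l c T stat f q i u 0 n

/-- Adjustment statistic: aggregate reported claims `X + Y`. -/
def statRep (x y : ℕ) (_ : Bool) (_ : ℕ) : ℕ := x + y

/-- Adjustment statistic: aggregate settled claims `X + (1-D)·Y + carry`. -/
def statSet (x y : ℕ) (d : Bool) (carry : ℕ) : ℕ := x + (if d then 0 else y) + carry

/-- Adjustment statistic: reported number of claims `1{X>0} + 1{Y>0}`. -/
def statRepN (x y : ℕ) (_ : Bool) (_ : ℕ) : ℕ :=
  (if 0 < x then 1 else 0) + (if 0 < y then 1 else 0)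

/-- Adjustment statistic: settled number of claims
`1{X>0} + 1{Y>0 and not delayed} + 1{delayed by-claim from the previous period}`. -/
def statSetN (x y : ℕ) (d : Bool) (carry : ℕ) : ℕ :=
  (if 0 < x then 1 else 0) + (if 0 < y ∧ d = false then 1 else 0) +
    (if 0 < carry then 1 else 0)

/-
Condition on the first period `(X₁, Y₁, D₁)`. Since the adjustment statistic `X + Y` ignores the
by-claim carried into a period, a carried amount `b` acts on the rest of the path exactly like a
reduction of the surplus by `b`. With `m = cᵢ - z`, the first period splits into three regions:
`X + Y ≤ m` (no ruin, and both the settled and the delayed case continue as `ψ(m - X - Y)`),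
`X ≤ m < X + Y` (ruin if `Y` is settled; if it is delayed, continue as `ψ'(0; X + Y - m)`), and
`m < X` (ruin). Summing `f` over the middle region along `X + Y = m + y` gives `ξ_y(m)` (the column
`X = 0` carries no mass), and `ψ'_j(0; y, n) = 1` for `y > c_j`, `n ≥ 1`, since the carried claim
exceeds the first premium. The horizon-one formula is the same computation with `n = 0`.
-/

open Finset

section Summation

lemma summable_mul_of_nonneg_of_le_one {α : Type*} {p h : α → ℝ} (hp : Summable p)
    (hp0 : ∀ a, 0 ≤ p a) (h0 : ∀ a, 0 ≤ h a) (h1 : ∀ a, h a ≤ 1) :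
    Summable fun a => p a * h a :=
  hp.of_nonneg_of_le (fun a => mul_nonneg (hp0 a) (h0 a))
    (fun a => mul_le_of_le_one_right (hp0 a) (h1 a))

lemma hasSum_pi_fin_prod {α : Type*} {g : α → ℝ} {s : ℝ} (hg : HasSum g s)
    (hg0 : ∀ a, 0 ≤ g a) (n : ℕ) : HasSum (fun ω : Fin n → α => ∏ k, g (ω k)) (s ^ n) := by
  induction n with
  | zero => simp
  | succ n ih =>
    set G : (Fin n → α) → ℝ := fun ω => ∏ k, g (ω k)
    have hG0 : 0 ≤ G := Pi.le_def.2 fun ω => prod_nonneg fun _ _ => hg0 _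
    have hmul : HasSum (fun p : α × (Fin n → α) => g p.1 * G p.2) (s * s ^ n) :=
      hg.mul ih (Summable.mul_of_nonneg hg.summable ih.summable (Pi.le_def.2 hg0) hG0)
    rw [← (Fin.consEquiv fun _ => α).hasSum_iff, pow_succ']
    convert hmul using 2 with p
    simp [G, Fin.prod_univ_succ]

lemma tsum_ite_lt_eq_tsum_add (N : ℕ) (g : ℕ → ℝ) :
    ∑' y, (if N < y then g y else 0) = ∑' k, g (N + 1 + k) := by
  rw [← (add_right_injective (N + 1)).tsum_eq (f := fun y => if N < y then g y else 0)]
  · exact tsum_congr fun k => if_pos (by omega)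
  · intro y hy
    have : N < y := by by_contra h; exact hy (if_neg h)
    exact ⟨y - (N + 1), by simp only; omega⟩

lemma hasSum_ite_add_le (g : ℕ → ℕ → ℝ) (m : ℕ) :
    HasSum (fun p : ℕ × ℕ => if p.1 + p.2 ≤ m then g p.1 p.2 else 0)
      (∑ x ∈ range (m + 1), ∑ y ∈ range (m - x + 1), g x y) := by
  have h : HasSum (fun p : ℕ × ℕ => if p.1 + p.2 ≤ m then g p.1 p.2 else 0)
      (∑ p ∈ range (m + 1) ×ˢ range (m + 1), if p.1 + p.2 ≤ m then g p.1 p.2 else 0) :=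
    hasSum_sum_of_ne_finset_zero fun p hp => by
      simp only [mem_product, mem_range] at hp
      exact if_neg (by omega)
  rwa [← sum_filter, sum_finset_product _ (range (m + 1)) (fun x => range (m - x + 1)) fun p => by
    simp only [mem_filter, mem_product, mem_range]; omega] at h

end Summation

section Weights

variable {f : ℕ → ℕ → ℝ} {q : ℝ}

lemma hasSum_w (hf0 : ∀ x y, 0 ≤ f x y) (hf : HasSum (fun p : ℕ × ℕ => f p.1 p.2) 1)
    (hq0 : 0 ≤ q) (hq1 : q ≤ 1) : HasSum (w f q) 1 := by
  have hD : HasSum (fun d : Bool => if d then q else 1 - q) 1 := by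
    simpa using hasSum_fintype (fun d : Bool => if d then q else 1 - q)
  have hD0 : ∀ d : Bool, 0 ≤ if d then q else 1 - q := fun d => by split_ifs <;> linarith
  have := hf.mul hD <|
    hf.summable.mul_of_nonneg hD.summable (Pi.le_def.2 fun p => hf0 _ _) (Pi.le_def.2 hD0)
  rw [one_mul] at this
  exact (Equiv.prodAssoc ℕ ℕ Bool).hasSum_iff.1 this

lemma w_nonneg (hf0 : ∀ x y, 0 ≤ f x y) (hq0 : 0 ≤ q) (hq1 : q ≤ 1) (a : ℕ × ℕ × Bool) :
    0 ≤ w f q a :=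
  mul_nonneg (hf0 _ _) (by split_ifs <;> linarith)

lemma tsum_w_mul (hw : Summable (w f q)) (hw0 : ∀ a, 0 ≤ w f q a) {Φ : ℕ × ℕ × Bool → ℝ}
    (hΦ0 : ∀ a, 0 ≤ Φ a) (hΦ1 : ∀ a, Φ a ≤ 1) :
    ∑' a, w f q a * Φ a =
      ∑' p : ℕ × ℕ, f p.1 p.2 * ((1 - q) * Φ (p.1, p.2, false) + q * Φ (p.1, p.2, true)) := by
  rw [← (Equiv.prodAssoc ℕ ℕ Bool).tsum_eq, Summable.tsum_prod']
  · refine tsum_congr fun p => ?_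
    simp only [tsum_bool, Equiv.prodAssoc_apply, w, Bool.false_eq_true, if_false, if_true]
    ring
  · exact (Equiv.prodAssoc ℕ ℕ Bool).summable_iff.2
      (summable_mul_of_nonneg_of_le_one hw hw0 hΦ0 hΦ1)
  · exact fun _ => Summable.of_finite

lemma pathWeight_nonneg (hw0 : ∀ a, 0 ≤ w f q a) (n : ℕ) (ω : Fin n → ℕ × ℕ × Bool) :
    0 ≤ pathWeight f q n ω :=
  prod_nonneg fun _ _ => hw0 _

lemma hasSum_pathWeight (hw : HasSum (w f q) 1) (hw0 : ∀ a, 0 ≤ w f q a) (n : ℕ) :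
    HasSum (pathWeight f q n) 1 := by
  have := hasSum_pi_fin_prod hw hw0 n
  rwa [one_pow] at this

lemma pathWeight_cons (n : ℕ) (a : ℕ × ℕ × Bool) (ω : Fin n → ℕ × ℕ × Bool) :
    pathWeight f q (n + 1) (Fin.cons a ω) = w f q a * pathWeight f q n ω := by
  simp [pathWeight, Fin.prod_univ_succ]

end Weights

section Ruin

variable {l : ℕ} {c : Fin l → ℕ} {T : Fin l → ℕ → Fin l} {stat : ℕ → ℕ → Bool → ℕ → ℕ}
  {f : ℕ → ℕ → ℝ} {q : ℝ}

def nextSurplus (c : Fin l → ℕ) (i : Fin l) (u : ℤ) (carry : ℕ) (a : ℕ × ℕ × Bool) : ℤ :=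
  u + c i - (a.1 + (if a.2.2 then 0 else (a.2.1 : ℤ)) + carry)

lemma ruined_cons (n : ℕ) (a : ℕ × ℕ × Bool) (ω : Fin n → ℕ × ℕ × Bool) (i : Fin l) (u : ℤ)
    (carry : ℕ) :
    ruined l c T stat (n + 1) (Fin.cons a ω) i u carry =
      if nextSurplus c i u carry a < 0 then true
      else ruined l c T stat n ω (T i (stat a.1 a.2.1 a.2.2 carry)) (nextSurplus c i u carry a)
        (if a.2.2 then a.2.1 else 0) := by
  simp only [ruined, Fin.cons_zero, Fin.cons_succ, nextSurplus]
  rfl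

lemma psiAux_of_neg {i : Fin l} {u : ℤ} (hu : u < 0) (carry n : ℕ) :
    psiAux l c T stat f q i u carry n = 1 :=
  if_pos hu

lemma psiAux_zero {i : Fin l} {u : ℤ} (hu : 0 ≤ u) (carry : ℕ) :
    psiAux l c T stat f q i u carry 0 = 0 := by
  simp [psiAux, ruined, not_lt.2 hu]

lemma psiAux_nonneg (hw0 : ∀ a, 0 ≤ w f q a) (i : Fin l) (u : ℤ) (carry n : ℕ) :
    0 ≤ psiAux l c T stat f q i u carry n := by
  unfold psiAux
  split_ifs
  · exact zero_le_one
  · exact tsum_nonneg fun ω => mul_nonneg (pathWeight_nonneg hw0 n ω) (by split_ifs <;> simp)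

lemma psiAux_le_one (hw : HasSum (w f q) 1) (hw0 : ∀ a, 0 ≤ w f q a) (i : Fin l) (u : ℤ)
    (carry n : ℕ) : psiAux l c T stat f q i u carry n ≤ 1 := by
  have hpw := hasSum_pathWeight hw hw0 n
  have h0 : ∀ ω, (0 : ℝ) ≤ if ruined l c T stat n ω i u carry then 1 else 0 :=
    fun ω => by split_ifs <;> simp
  have h1 : ∀ ω, (if ruined l c T stat n ω i u carry then 1 else 0 : ℝ) ≤ 1 :=
    fun ω => by split_ifs <;> simp
  unfold psiAux
  split_ifs
  · exact le_rfl
  · calc _ ≤ ∑' ω, pathWeight f q n ω :=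
          Summable.tsum_le_tsum (fun ω => mul_le_of_le_one_right (pathWeight_nonneg hw0 n ω) (h1 ω))
            (summable_mul_of_nonneg_of_le_one hpw.summable (pathWeight_nonneg hw0 n) h0 h1)
            hpw.summable
      _ = 1 := hpw.tsum_eq

lemma psiAux_succ (hw : HasSum (w f q) 1) (hw0 : ∀ a, 0 ≤ w f q a) (i : Fin l) {u : ℤ}
    (hu : 0 ≤ u) (carry n : ℕ) :
    psiAux l c T stat f q i u carry (n + 1) = ∑' a, w f q a *
      psiAux l c T stat f q (T i (stat a.1 a.2.1 a.2.2 carry)) (nextSurplus c i u carry a)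
        (if a.2.2 then a.2.1 else 0) n := by
  set R : (ℕ × ℕ × Bool) → (Fin n → ℕ × ℕ × Bool) → ℝ :=
    fun a ω => if ruined l c T stat (n + 1) (Fin.cons a ω) i u carry then 1 else 0
  have hpw := hasSum_pathWeight hw hw0 n
  have hrow : ∀ a, ∑' ω, pathWeight f q n ω * R a ω = psiAux l c T stat f q
      (T i (stat a.1 a.2.1 a.2.2 carry)) (nextSurplus c i u carry a)
      (if a.2.2 then a.2.1 else 0) n := by
    intro a
    by_cases h : nextSurplus c i u carry a < 0
    · simp [R, ruined_cons, h, psiAux, hpw.tsum_eq]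
    · simp [R, ruined_cons, h, psiAux]
  have hsum : Summable fun p : (ℕ × ℕ × Bool) × (Fin n → ℕ × ℕ × Bool) =>
      w f q p.1 * pathWeight f q n p.2 * R p.1 p.2 :=
    summable_mul_of_nonneg_of_le_one
      (hw.summable.mul_of_nonneg hpw.summable (Pi.le_def.2 hw0)
        (Pi.le_def.2 (pathWeight_nonneg hw0 n)))
      (fun p => mul_nonneg (hw0 _) (pathWeight_nonneg hw0 n _))
      (fun p => by simp only [R]; split_ifs <;> simp)
      (fun p => by simp only [R]; split_ifs <;> simp)
  rw [psiAux, if_neg (not_lt.2 hu), ← (Fin.consEquiv fun _ => ℕ × ℕ × Bool).tsum_eq]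
  calc _ = ∑' p : (ℕ × ℕ × Bool) × (Fin n → ℕ × ℕ × Bool),
        w f q p.1 * pathWeight f q n p.2 * R p.1 p.2 :=
        tsum_congr fun p => by
          change pathWeight f q (n + 1) (Fin.cons p.1 p.2) * R p.1 p.2 = _
          rw [pathWeight_cons]
    _ = _ := by
      rw [hsum.tsum_prod' fun a => hsum.prod_factor a]
      simp_rw [mul_assoc, tsum_mul_left, hrow]

end Ruin

section Carry

variable {l : ℕ} {c : Fin l → ℕ} {T : Fin l → ℕ → Fin l} {stat : ℕ → ℕ → Bool → ℕ → ℕ}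
  {f : ℕ → ℕ → ℝ} {q : ℝ}

lemma ruined_eq_sub_carry (hstat : ∀ x y d carry, stat x y d carry = stat x y d 0) :
    ∀ (n : ℕ) (ω : Fin n → ℕ × ℕ × Bool) (j : Fin l) (u : ℤ) (carry : ℕ),
      ruined l c T stat n ω j u carry = ruined l c T stat n ω j (u - carry) 0
  | 0, _, _, _, _ => rfl
  | n + 1, ω, j, u, carry => by
    have hsurplus : nextSurplus c j (u - carry) 0 (ω 0) = nextSurplus c j u carry (ω 0) := by
      simp only [nextSurplus]
      push_cast
      ring
    rw [← Fin.cons_self_tail ω, ruined_cons, ruined_cons, hsurplus, hstat _ _ _ carry]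

lemma psiAux_congr_carry (hstat : ∀ x y d carry, stat x y d carry = stat x y d 0) (j : Fin l)
    {u v : ℤ} {b b' : ℕ} (hu : 0 ≤ u) (hv : 0 ≤ v) (h : u - b = v - b') (n : ℕ) :
    psiAux l c T stat f q j u b n = psiAux l c T stat f q j v b' n := by
  rw [psiAux, psiAux, if_neg (not_lt.2 hu), if_neg (not_lt.2 hv)]
  refine tsum_congr fun ω => ?_
  rw [ruined_eq_sub_carry hstat n ω j u, ruined_eq_sub_carry hstat n ω j v, h]

lemma psiAux_eq_one_of_lt_carry (hw : HasSum (w f q) 1) (hw0 : ∀ a, 0 ≤ w f q a) (j : Fin l)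
    {u : ℤ} (hu : 0 ≤ u) {carry : ℕ} (h : u + c j < carry) {n : ℕ} (hn : n ≠ 0) :
    psiAux l c T stat f q j u carry n = 1 := by
  obtain ⟨n, rfl⟩ := Nat.exists_eq_succ_of_ne_zero hn
  rw [psiAux_succ hw hw0 j hu, ← hw.tsum_eq]
  refine tsum_congr fun a => ?_
  rw [psiAux_of_neg, mul_one]
  simp only [nextSurplus]
  split_ifs <;> omega

end Carry

section Regions

variable {f : ℕ → ℕ → ℝ}

lemma summable_xi (hf : Summable fun p : ℕ × ℕ => f p.1 p.2) (m : ℕ) :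
    Summable fun y => xi f y m := by
  refine summable_sum fun x hx => ?_
  have hxm := (mem_Icc.1 hx).2
  refine ((hf.prod_factor x).comp_injective (add_left_injective (m - x))).congr fun y => ?_
  simp only [Function.comp_apply]
  congr 1
  omega

lemma xi_nonneg (hf0 : ∀ x y, 0 ≤ f x y) (y m : ℕ) : 0 ≤ xi f y m :=
  sum_nonneg fun _ _ => hf0 _ _

lemma hasSum_mul_ite_le_lt_add (hf0 : ∀ x y, 0 ≤ f x y)
    (hf : Summable fun p : ℕ × ℕ => f p.1 p.2) (hf0y : ∀ y, 0 < y → f 0 y = 0) (m : ℕ)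
    {G : ℕ → ℝ} (hG0 : ∀ k, 0 ≤ G k) (hG1 : ∀ k, G k ≤ 1) :
    HasSum (fun p : ℕ × ℕ => f p.1 p.2 * (if p.1 ≤ m ∧ m < p.1 + p.2 then G (p.1 + p.2 - m) else 0))
      (∑' k, xi f (k + 1) m * G (k + 1)) := by
  set F : ℕ → ℕ → ℝ := fun x y => f x y * (if x ≤ m ∧ m < x + y then G (x + y - m) else 0)
  have hsum : Summable fun p : ℕ × ℕ => F p.1 p.2 :=
    summable_mul_of_nonneg_of_le_one hf (fun p => hf0 _ _)
      (fun p => by split_ifs; exacts [hG0 _, le_rfl])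
      (fun p => by split_ifs; exacts [hG1 _, zero_le_one])
  have hrow : ∀ x, ∑' y, F x y =
      if x ∈ Icc 1 m then ∑' k, f x (k + 1 + m - x) * G (k + 1) else 0 := by
    intro x
    split_ifs with hx
    · have hxm := mem_Icc.1 hx
      calc ∑' y, F x y = ∑' y, if m - x < y then f x y * G (x + y - m) else 0 :=
            tsum_congr fun y => by
              simp only [F]
              by_cases hy : m - x < y
              · rw [if_pos hy, if_pos ⟨hxm.2, by omega⟩]
              · rw [if_neg hy, if_neg (by omega), mul_zero]
        _ = ∑' k, f x (k + 1 + m - x) * G (k + 1) := by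
            rw [tsum_ite_lt_eq_tsum_add]
            exact tsum_congr fun k => by congr 2 <;> omega
    · refine (tsum_congr fun y => ?_).trans tsum_zero
      simp only [F]
      -- outside `Icc 1 m` the middle region only meets the column `x = 0`, where `f` vanishes
      by_cases hxy : x ≤ m ∧ m < x + y
      · obtain ⟨hxm, hmy⟩ := hxy
        obtain rfl : x = 0 := by simp only [mem_Icc] at hx; omega
        exact mul_eq_zero_of_left (hf0y y (by omega)) _
      · exact mul_eq_zero_of_right _ (if_neg hxy)
  have hrow_sum : ∀ x ∈ Icc 1 m, Summable fun k => f x (k + 1 + m - x) * G (k + 1) := by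
    intro x hx
    have hxm := (mem_Icc.1 hx).2
    refine summable_mul_of_nonneg_of_le_one ?_ (fun k => hf0 _ _) (fun k => hG0 _) (fun k => hG1 _)
    refine ((hf.prod_factor x).comp_injective (add_left_injective (1 + m - x))).congr fun k => ?_
    simp only [Function.comp_apply]
    congr 1
    omega
  convert hsum.hasSum using 1
  rw [hsum.tsum_prod' hsum.prod_factor, tsum_congr hrow, tsum_eq_sum fun x hx => if_neg hx,
    sum_congr rfl fun x hx => if_pos hx, ← Summable.tsum_finsetSum hrow_sum]
  simp only [xi, sum_mul]

lemma hasSum_mul_ite_lt_fst (hf0 : ∀ x y, 0 ≤ f x y) (hf : Summable fun p : ℕ × ℕ => f p.1 p.2)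
    (m : ℕ) :
    HasSum (fun p : ℕ × ℕ => f p.1 p.2 * (if m < p.1 then 1 else 0)) (∑' k, fX f (m + 1 + k)) := by
  have hsum := summable_mul_of_nonneg_of_le_one hf (fun p => hf0 _ _)
    (h := fun p : ℕ × ℕ => if m < p.1 then (1 : ℝ) else 0)
    (fun p => by split_ifs <;> norm_num) (fun p => by split_ifs <;> norm_num)
  convert hsum.hasSum using 1
  rw [hsum.tsum_prod' hsum.prod_factor, ← tsum_ite_lt_eq_tsum_add]
  refine tsum_congr fun x => ?_
  split_ifs <;> simp [fX]

end Regions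

section ReportedAggregate

variable {l : ℕ} {c : Fin l → ℕ} {T : Fin l → ℕ → Fin l} {f : ℕ → ℕ → ℝ} {q : ℝ}

lemma psiAux_statRep_first_period_split (i : Fin l) {m z : ℕ} (hm : m + z = c i) (n x y : ℕ) :
    (1 - q) * psiAux l c T statRep f q (T i (x + y)) (nextSurplus c i 0 z (x, y, false)) 0 n
      + q * psiAux l c T statRep f q (T i (x + y)) (nextSurplus c i 0 z (x, y, true)) y n
    = (if x + y ≤ m then psi l c T statRep f q (T i (x + y)) ((m - x - y : ℕ) : ℤ) n else 0)
      + q * (if x ≤ m ∧ m < x + y then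
          psiAux l c T statRep f q (T i (m + (x + y - m))) 0 (x + y - m) n else 0)
      + (1 - q) * (if x ≤ m ∧ m < x + y then 1 else 0)
      + (if m < x then 1 else 0) := by
  have hstat : ∀ x y d carry, statRep x y d carry = statRep x y d 0 := fun _ _ _ _ => rfl
  have hF : nextSurplus c i 0 z (x, y, false) = (m : ℤ) - (x + y) := by simp [nextSurplus]; omega
  have hT : nextSurplus c i 0 z (x, y, true) = (m : ℤ) - x := by simp [nextSurplus]; omega
  rw [hF, hT]
  rcases lt_or_ge m x with hx | hx
  · have hsettled : psiAux l c T statRep f q (T i (x + y)) ((m : ℤ) - (x + y)) 0 n = 1 :=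
      psiAux_of_neg (by omega) _ _
    have hdelayed : psiAux l c T statRep f q (T i (x + y)) ((m : ℤ) - x) y n = 1 :=
      psiAux_of_neg (by omega) _ _
    simp only [hsettled, hdelayed, if_neg (show ¬x + y ≤ m by omega),
      if_neg (show ¬(x ≤ m ∧ m < x + y) by omega), if_pos hx]
    ring
  rcases le_or_gt (x + y) m with hxy | hxy
  · have hsettled : psiAux l c T statRep f q (T i (x + y)) ((m : ℤ) - (x + y)) 0 n =
        psi l c T statRep f q (T i (x + y)) ((m - x - y : ℕ) : ℤ) n :=
      psiAux_congr_carry hstat _ (by omega) (by omega) (by omega) n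
    have hdelayed : psiAux l c T statRep f q (T i (x + y)) ((m : ℤ) - x) y n =
        psi l c T statRep f q (T i (x + y)) ((m - x - y : ℕ) : ℤ) n :=
      psiAux_congr_carry hstat _ (by omega) (by omega) (by omega) n
    simp only [hsettled, hdelayed, if_pos hxy, if_neg (show ¬(x ≤ m ∧ m < x + y) by omega),
      if_neg (show ¬m < x by omega)]
    ring
  · have hsettled : psiAux l c T statRep f q (T i (x + y)) ((m : ℤ) - (x + y)) 0 n = 1 :=
      psiAux_of_neg (by omega) _ _
    have hdelayed : psiAux l c T statRep f q (T i (x + y)) ((m : ℤ) - x) y n =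
        psiAux l c T statRep f q (T i (m + (x + y - m))) 0 (x + y - m) n := by
      rw [show m + (x + y - m) = x + y by omega]
      exact psiAux_congr_carry hstat _ (by omega) le_rfl (by omega) n
    simp only [hsettled, hdelayed, if_neg (show ¬x + y ≤ m by omega),
      if_pos (show x ≤ m ∧ m < x + y by omega), if_neg (show ¬m < x by omega)]
    ring

theorem psiAux_statRep_succ (hf0 : ∀ x y, 0 ≤ f x y) (hf : HasSum (fun p : ℕ × ℕ => f p.1 p.2) 1)
    (hf0y : ∀ y, 0 < y → f 0 y = 0) (hq0 : 0 ≤ q) (hq1 : q ≤ 1) (i : Fin l) {m z : ℕ}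
    (hm : m + z = c i) (n : ℕ) :
    psiAux l c T statRep f q i 0 z (n + 1) =
      ∑ x ∈ range (m + 1), ∑ y ∈ range (m - x + 1),
          f x y * psi l c T statRep f q (T i (x + y)) ((m - x - y : ℕ) : ℤ) n
      + q * ∑' k, xi f (k + 1) m * psiAux l c T statRep f q (T i (m + (k + 1))) 0 (k + 1) n
      + (1 - q) * ∑' k, xi f (k + 1) m
      + ∑' k, fX f (m + 1 + k) := by
  have hw := hasSum_w hf0 hf hq0 hq1
  have hw0 := w_nonneg hf0 hq0 hq1
  have hψ0 := psiAux_nonneg (l := l) (c := c) (T := T) (stat := statRep) hw0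
  have hψ1 := psiAux_le_one (l := l) (c := c) (T := T) (stat := statRep) hw hw0
  have h1 := hasSum_ite_add_le
    (fun x y => f x y * psi l c T statRep f q (T i (x + y)) ((m - x - y : ℕ) : ℤ) n) m
  have h2 := hasSum_mul_ite_le_lt_add hf0 hf.summable hf0y m
    (G := fun k => psiAux l c T statRep f q (T i (m + k)) 0 k n)
    (fun _ => hψ0 _ _ _ _) (fun _ => hψ1 _ _ _ _)
  have h3 := hasSum_mul_ite_le_lt_add hf0 hf.summable hf0y m (G := fun _ => 1)
    (fun _ => zero_le_one) (fun _ => le_rfl)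
  have h4 := hasSum_mul_ite_lt_fst hf0 hf.summable m
  simp only [mul_one] at h2 h3
  rw [psiAux_succ hw hw0 i le_rfl, tsum_w_mul hw.summable hw0 (fun _ => hψ0 _ _ _ _)
    (fun _ => hψ1 _ _ _ _), ← (((h1.add (h2.mul_left q)).add (h3.mul_left (1 - q))).add h4).tsum_eq]
  refine tsum_congr fun p => ?_
  simp only [statRep, Bool.false_eq_true, if_false, if_true]
  rw [psiAux_statRep_first_period_split i hm n p.1 p.2]
  split_ifs <;> ring

end ReportedAggregate

section PremiumRule

variable {l : ℕ} {c : Fin l → ℕ} {T : Fin l → ℕ → Fin l} {stat : ℕ → ℕ → Bool → ℕ → ℕ}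
  {f : ℕ → ℕ → ℝ} {q : ℝ} {t : Fin l → Fin l → ℕ → ℝ}

lemma sum_rule_mul (hT : ∀ i j s, t i j s = if j = T i s then (1 : ℝ) else 0) (i : Fin l) (s : ℕ)
    (F : Fin l → ℝ) : ∑ j, t i j s * F j = F (T i s) := by
  simp [hT]

lemma tsum_xi_mul_psiAux_split (hf0 : ∀ x y, 0 ≤ f x y) (hf : HasSum (fun p : ℕ × ℕ => f p.1 p.2) 1)
    (hq0 : 0 ≤ q) (hq1 : q ≤ 1) (hT : ∀ i j s, t i j s = if j = T i s then (1 : ℝ) else 0)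
    (i : Fin l) (m : ℕ) {n : ℕ} (hn : n ≠ 0) :
    ∑' k, xi f (k + 1) m * psiAux l c T stat f q (T i (m + (k + 1))) 0 (k + 1) n =
      (∑ j, ∑ y ∈ Icc 1 (c j), t i j (m + y) * psiAux l c T stat f q j 0 y n * xi f y m)
      + ∑ j, ∑' k, t i j (m + (c j + 1 + k)) * xi f (c j + 1 + k) m := by
  have hw := hasSum_w hf0 hf hq0 hq1
  have hw0 := w_nonneg hf0 hq0 hq1
  set F : Fin l → ℕ → ℝ :=
    fun j k => t i j (m + (k + 1)) * psiAux l c T stat f q j 0 (k + 1) n * xi f (k + 1) m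
  have hF : ∀ j, Summable (F j) := fun j =>
    ((summable_xi hf.summable m).comp_injective (add_left_injective 1)).of_nonneg_of_le
      (fun k => mul_nonneg (mul_nonneg (by rw [hT]; split_ifs <;> norm_num)
        (psiAux_nonneg hw0 _ _ _ _)) (xi_nonneg hf0 _ _))
      (fun k => mul_le_of_le_one_left (xi_nonneg hf0 _ _) <|
        mul_le_one₀ (by rw [hT]; split_ifs <;> norm_num) (psiAux_nonneg hw0 _ _ _ _)
          (psiAux_le_one hw hw0 _ _ _ _))
  have hsplit : ∀ j, ∑' k, F j k =
      ∑ y ∈ Icc 1 (c j), t i j (m + y) * psiAux l c T stat f q j 0 y n * xi f y m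
      + ∑' k, t i j (m + (c j + 1 + k)) * xi f (c j + 1 + k) m := by
    intro j
    rw [← (hF j).sum_add_tsum_nat_add (c j), ← Ico_add_one_right_eq_Icc, sum_Ico_eq_sum_range,
      Nat.add_sub_cancel]
    congr 1
    · exact sum_congr rfl fun k _ => by rw [add_comm 1 k]
    · refine tsum_congr fun k => ?_
      simp only [F]
      rw [show k + c j + 1 = c j + 1 + k by ring,
        psiAux_eq_one_of_lt_carry hw hw0 j le_rfl (by push_cast; omega) hn, mul_one]
  calc _ = ∑' k, ∑ j, F j k := tsum_congr fun k => by
          simp only [F]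
          rw [← sum_mul, sum_rule_mul hT i _ fun j => psiAux l c T stat f q j 0 (k + 1) n, mul_comm]
    _ = _ := by rw [Summable.tsum_finsetSum fun j _ => hF j, sum_congr rfl fun j _ => hsplit j,
          sum_add_distrib]

end PremiumRule

theorem corollary1_reported_aggregate_general
    (l : ℕ) (c : Fin l → ℕ)
    (f : ℕ → ℕ → ℝ) (hfnn : ∀ x y, 0 ≤ f x y)
    (hfsum : ∑' p : ℕ × ℕ, f p.1 p.2 = 1)
    (hfdeg : ∀ y : ℕ, 0 < y → f 0 y = 0)
    (q : ℝ) (hq0 : 0 ≤ q) (hq1 : q ≤ 1)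
    (t : Fin l → Fin l → ℕ → ℝ) (T : Fin l → ℕ → Fin l)
    (hT : ∀ i j s, t i j s = if j = T i s then (1 : ℝ) else 0)
    (i : Fin l) (z : ℕ) (hz2 : z ≤ c i) (n : ℕ) (hn : 1 ≤ n) :
    psiAux l c T statRep f q i 0 z (n + 1) =
        (∑ j : Fin l, ∑ x ∈ Finset.range (c i - z + 1), ∑ y ∈ Finset.range (c i - z - x + 1),
          t i j (x + y) * psi l c T statRep f q j ((c i - z - x - y : ℕ) : ℤ) n * f x y)
      + q * (∑ j : Fin l, ∑ y ∈ Finset.Icc 1 (c j),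
          t i j (c i - z + y) * psiAux l c T statRep f q j 0 y n * xi f y (c i - z))
      + q * (∑ j : Fin l, ∑' k : ℕ,
          t i j (c i - z + (c j + 1 + k)) * xi f (c j + 1 + k) (c i - z))
      + (1 - q) * (∑' k : ℕ, xi f (k + 1) (c i - z))
      + (∑' k : ℕ, fX f (c i - z + 1 + k)) ∧
    psiAux l c T statRep f q i 0 z 1 =
      (1 - q) * (∑' k : ℕ, xi f (k + 1) (c i - z))
      + (∑' k : ℕ, fX f (c i - z + 1 + k)) := by
  have hsum : Summable fun p : ℕ × ℕ => f p.1 p.2 := by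
    by_contra h
    rw [tsum_eq_zero_of_not_summable h] at hfsum
    exact zero_ne_one hfsum
  have hf : HasSum (fun p : ℕ × ℕ => f p.1 p.2) 1 := hfsum ▸ hsum.hasSum
  obtain ⟨m, hm⟩ : ∃ m, m + z = c i := ⟨c i - z, by omega⟩
  rw [show c i - z = m by omega]
  have hsettled : ∑ j, ∑ x ∈ range (m + 1), ∑ y ∈ range (m - x + 1),
        t i j (x + y) * psi l c T statRep f q j ((m - x - y : ℕ) : ℤ) n * f x y =
      ∑ x ∈ range (m + 1), ∑ y ∈ range (m - x + 1),
        f x y * psi l c T statRep f q (T i (x + y)) ((m - x - y : ℕ) : ℤ) n := by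
    rw [sum_comm]
    refine sum_congr rfl fun x _ => ?_
    rw [sum_comm]
    refine sum_congr rfl fun y _ => ?_
    rw [← sum_mul, sum_rule_mul hT i _ fun j => psi l c T statRep f q j ((m - x - y : ℕ) : ℤ) n,
      mul_comm]
  constructor
  · rw [psiAux_statRep_succ hfnn hf hfdeg hq0 hq1 i hm n,
      tsum_xi_mul_psiAux_split hfnn hf hq0 hq1 hT i m (by omega), hsettled]
    ring
  · rw [psiAux_statRep_succ hfnn hf hfdeg hq0 hq1 i hm 0]
    simp [psi, psiAux_zero]

/-- Corollary 1: recursion for ψ'_i(0; z, ·) when premiums are adjusted according to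
aggregate reported claims. -/
theorem corollary1_reported_aggregate
    (l : ℕ) (c : Fin l → ℕ) (hcpos : ∀ i, 0 < c i) (hcmono : StrictMono c)
    (f : ℕ → ℕ → ℝ) (hfnn : ∀ x y, 0 ≤ f x y)
    (hfsum : ∑' p : ℕ × ℕ, f p.1 p.2 = 1)
    (hfdeg : ∀ y : ℕ, 0 < y → f 0 y = 0)
    (q : ℝ) (hq0 : 0 ≤ q) (hq1 : q ≤ 1)
    (t : Fin l → Fin l → ℕ → ℝ) (T : Fin l → ℕ → Fin l)
    (hT : ∀ i j s, t i j s = if j = T i s then (1 : ℝ) else 0)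
    (i : Fin l) (z : ℕ) (hz1 : 0 < z) (hz2 : z ≤ c i) (n : ℕ) (hn : 1 ≤ n) :
    psiAux l c T statRep f q i 0 z (n + 1) =
        (∑ j : Fin l, ∑ x ∈ Finset.range (c i - z + 1), ∑ y ∈ Finset.range (c i - z - x + 1),
          t i j (x + y) * psi l c T statRep f q j ((c i - z - x - y : ℕ) : ℤ) n * f x y)
      + q * (∑ j : Fin l, ∑ y ∈ Finset.Icc 1 (c j),
          t i j (c i - z + y) * psiAux l c T statRep f q j 0 y n * xi f y (c i - z))
      + q * (∑ j : Fin l, ∑' k : ℕ,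
          t i j (c i - z + (c j + 1 + k)) * xi f (c j + 1 + k) (c i - z))
      + (1 - q) * (∑' k : ℕ, xi f (k + 1) (c i - z))
      + (∑' k : ℕ, fX f (c i - z + 1 + k)) ∧
    psiAux l c T statRep f q i 0 z 1 =
      (1 - q) * (∑' k : ℕ, xi f (k + 1) (c i - z))
      + (∑' k : ℕ, fX f (c i - z + 1 + k)) :=
  corollary1_reported_aggregate_general l c f hfnn hfsum hfdeg q hq0 hq1 t T hT i z hz2 n hn

end DelayedClaims
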